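/- Let H be a nonzero finite-dimensional complex Hilbert space, and let P₁, P₂, … be a sequence of partitions of H for which there is a partition Q of H such that, for every n ≥ 1, Q is the least upper bound of {Pᵢ : i ≥ n} in the refinement order. Let r₁ be a multicell of P₁, and for each i ≥ 1 let r_{i+1} be the least multicell of P_{i+1} containing rᵢ. Then r₁ ≤ r₂ ≤ ⋯ is a monotone increasing sequence of subspaces that is eventually constant, and its eventual value is the least multicell of Q containing r₁. -/

import Mathlib

variable {H : Type*} [NormedAddCommGroup H] [InnerProductSpace ℂ H]

/-- Two subspaces of a complex inner product space are orthogonal when every vector of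
one is orthogonal to every vector of the other. -/
def Orth (p q : Submodule ℂ H) : Prop :=
  ∀ x ∈ p, ∀ y ∈ q, @inner ℂ H _ x y = 0

/-- A partition of `H` is a set of nonzero closed subspaces of `H` that are pairwise
orthogonal and whose supremum in the complete lattice of closed subspaces of `H`
(i.e. the topological closure of the submodule supremum) is all of `H`. -/
def IsPartition (P : Set (Submodule ℂ H)) : Prop :=
  (∀ p ∈ P, p ≠ ⊥) ∧
  (∀ p ∈ P, IsClosed (p : Set H)) ∧
  (∀ p ∈ P, ∀ q ∈ P, p ≠ q → Orth p q) ∧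
  (sSup P).topologicalClosure = ⊤

/-- `P₁` refines `P₂` when every cell of `P₁` is contained in some cell of `P₂`. -/
def Refines (P₁ P₂ : Set (Submodule ℂ H)) : Prop :=
  ∀ p ∈ P₁, ∃ q ∈ P₂, p ≤ q

/-- A multicell of a partition `P` is the supremum (in the lattice of closed subspaces)
of a possibly empty subset of `P`. -/
def IsMulticell (P : Set (Submodule ℂ H)) (m : Submodule ℂ H) : Prop :=
  ∃ C ⊆ P, m = (sSup C).topologicalClosure

/-!
A subspace `m` is a multicell of a partition `P` exactly when every cell of `P` lies in `m` or
in `mᗮ`, i.e. when `P` refines the two-cell partition `{m, mᗮ}`. Hence multicells of `Q` are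
multicells of every partition refining `Q`, and, since `Q` is the least upper bound of the
tail `{Pᵢ : i ≥ n}`, a common multicell of that tail is a multicell of `Q`. The sequence `r` is
monotone, so it stabilises in the Noetherian lattice of subspaces; its limit is a multicell of
every late `Pᵢ`, hence of `Q`, and by induction it lies below every multicell of `Q`
containing `r 0`.
-/

open Submodule

theorem orth_iff_isOrtho {p q : Submodule ℂ H} : Orth p q ↔ p ⟂ q :=
  isOrtho_iff_inner_eq.symm

theorem Refines.trans {P₁ P₂ P₃ : Set (Submodule ℂ H)} (h₁₂ : Refines P₁ P₂)
    (h₂₃ : Refines P₂ P₃) : Refines P₁ P₃ := fun p hp ↦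
  let ⟨q, hq, hpq⟩ := h₁₂ p hp
  let ⟨s, hs, hqs⟩ := h₂₃ q hq
  ⟨s, hs, hpq.trans hqs⟩

def bipartition (m : Submodule ℂ H) : Set (Submodule ℂ H) :=
  {m, mᗮ} \ {⊥}

theorem refines_bipartition_iff {P : Set (Submodule ℂ H)} (hP : ∀ p ∈ P, p ≠ ⊥)
    {m : Submodule ℂ H} : Refines P (bipartition m) ↔ ∀ p ∈ P, p ≤ m ∨ p ≤ mᗮ := by
  constructor
  · intro h p hp
    obtain ⟨q, ⟨rfl | rfl, -⟩, hpq⟩ := h p hp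
    exacts [Or.inl hpq, Or.inr hpq]
  · intro h p hp
    have hq_ne {q : Submodule ℂ H} (hpq : p ≤ q) : q ∉ ({⊥} : Set _) := fun hq ↦
      hP p hp (le_bot_iff.mp (Set.mem_singleton_iff.mp hq ▸ hpq))
    rcases h p hp with hpm | hpm
    exacts [⟨m, ⟨.inl rfl, hq_ne hpm⟩, hpm⟩, ⟨mᗮ, ⟨.inr rfl, hq_ne hpm⟩, hpm⟩]

section FiniteDimensional

variable [FiniteDimensional ℂ H]

theorem IsPartition.sSup_eq_top {P : Set (Submodule ℂ H)} (hP : IsPartition P) :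
    sSup P = ⊤ :=
  topologicalClosure_eq_self (sSup P) ▸ hP.2.2.2

theorem isPartition_bipartition (m : Submodule ℂ H) : IsPartition (bipartition m) := by
  refine ⟨fun p hp ↦ hp.2, fun p _ ↦ p.closed_of_finiteDimensional, ?_, ?_⟩
  · rintro p ⟨rfl | rfl, -⟩ q ⟨rfl | rfl, -⟩ hpq <;> rw [orth_iff_isOrtho]
    exacts [absurd rfl hpq, isOrtho_orthogonal_right p, (isOrtho_orthogonal_right q).symm,
      absurd rfl hpq]
  · rw [topologicalClosure_eq_self, bipartition, sSup_sdiff_singleton_bot, sSup_pair,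
      sup_orthogonal_of_hasOrthogonalProjection]

theorem isMulticell_iff_forall_le_or_le_orthogonal {P : Set (Submodule ℂ H)}
    (hP : IsPartition P) {m : Submodule ℂ H} :
    IsMulticell P m ↔ ∀ p ∈ P, p ≤ m ∨ p ≤ mᗮ := by
  constructor
  · rintro ⟨C, hCP, rfl⟩ p hp
    rw [topologicalClosure_eq_self]
    by_cases hpC : p ∈ C
    · exact .inl (le_sSup hpC)
    · refine .inr (IsOrtho.le (isOrtho_comm.mp (isOrtho_sSup_left.mpr fun c hc ↦ ?_)))
      exact orth_iff_isOrtho.mp (hP.2.2.1 c (hCP hc) p hp fun hcp ↦ hpC (hcp ▸ hc))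
  · intro hsplit
    refine ⟨{p ∈ P | p ≤ m}, Set.sep_subset _ _, ?_⟩
    rw [topologicalClosure_eq_self]
    set A := sSup {p ∈ P | p ≤ m}
    set B := sSup {p ∈ P | p ≤ mᗮ}
    have hAm : A ≤ m := sSup_le fun p hp ↦ hp.2
    have hAB : A ⊔ B = ⊤ := by
      refine eq_top_iff.mpr (hP.sSup_eq_top ▸ sSup_le fun p hp ↦ ?_)
      rcases hsplit p hp with h | h
      exacts [le_sup_of_le_left (le_sSup ⟨hp, h⟩), le_sup_of_le_right (le_sSup ⟨hp, h⟩)]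
    -- modular law: `m = (A ⊔ B) ⊓ m = A ⊔ (B ⊓ m)`, and `B ⊓ m ≤ mᗮ ⊓ m = ⊥`
    have hBm : B ⊓ m = ⊥ :=
      ((orthogonal_disjoint m).symm.mono_left (sSup_le fun p hp ↦ hp.2)).eq_bot
    simpa [hAB, hBm] using sup_inf_assoc_of_le B hAm

theorem isMulticell_iff_refines_bipartition {P : Set (Submodule ℂ H)} (hP : IsPartition P)
    {m : Submodule ℂ H} : IsMulticell P m ↔ Refines P (bipartition m) := by
  rw [isMulticell_iff_forall_le_or_le_orthogonal hP, refines_bipartition_iff hP.1]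

theorem IsMulticell.of_refines {P Q : Set (Submodule ℂ H)} (hP : IsPartition P)
    (hQ : IsPartition Q) (hPQ : Refines P Q) {m : Submodule ℂ H} (hm : IsMulticell Q m) :
    IsMulticell P m :=
  (isMulticell_iff_refines_bipartition hP).mpr
    (hPQ.trans ((isMulticell_iff_refines_bipartition hQ).mp hm))

theorem IsMulticell.of_forall_of_isLeast_refines {ι : Type*} {P : ι → Set (Submodule ℂ H)}
    (hP : ∀ i, IsPartition (P i)) {Q : Set (Submodule ℂ H)} (hQ : IsPartition Q)
    (hQ_least : ∀ Q', IsPartition Q' → (∀ i, Refines (P i) Q') → Refines Q Q')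
    {m : Submodule ℂ H} (hm : ∀ i, IsMulticell (P i) m) : IsMulticell Q m :=
  (isMulticell_iff_refines_bipartition hQ).mpr <| hQ_least _ (isPartition_bipartition m)
    fun i ↦ (isMulticell_iff_refines_bipartition (hP i)).mp (hm i)

end FiniteDimensional

theorem least_multicell_sequence_stabilizes_general
    [FiniteDimensional ℂ H]
    (P : ℕ → Set (Submodule ℂ H)) (hP : ∀ i, IsPartition (P i))
    (Q : Set (Submodule ℂ H)) (hQ : IsPartition Q)
    (hQlub : ∀ n : ℕ, (∀ i, n ≤ i → Refines (P i) Q) ∧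
      ∀ Q' : Set (Submodule ℂ H), IsPartition Q' →
        (∀ i, n ≤ i → Refines (P i) Q') → Refines Q Q')
    (r : ℕ → Submodule ℂ H)
    (hrmc : ∀ i, IsMulticell (P (i + 1)) (r (i + 1)))
    (hrle : ∀ i, r i ≤ r (i + 1))
    (hrleast : ∀ i m, IsMulticell (P (i + 1)) m → r i ≤ m → r (i + 1) ≤ m) :
    Monotone r ∧
      ∃ N : ℕ, (∀ n, N ≤ n → r n = r N) ∧ IsMulticell Q (r N) ∧ r 0 ≤ r N ∧
        ∀ m, IsMulticell Q m → r 0 ≤ m → r N ≤ m := by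
  have hmono : Monotone r := monotone_nat_of_le_succ hrle
  obtain ⟨N, hN⟩ := monotone_stabilizes_iff_noetherian.mpr inferInstance ⟨r, hmono⟩
  have hstab : ∀ n, N ≤ n → r n = r N := fun n hn ↦ (hN n hn).symm
  have hQ_mc : IsMulticell Q (r N) := by
    refine IsMulticell.of_forall_of_isLeast_refines (P := fun i : {i // N + 1 ≤ i} ↦ P i)
      (fun i ↦ hP i) hQ (fun Q' hQ' h ↦ (hQlub (N + 1)).2 Q' hQ' fun i hi ↦ h ⟨i, hi⟩) ?_
    rintro ⟨_ | k, hk⟩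
    · omega
    · exact hstab (k + 1) (by omega) ▸ hrmc k
  have hle_of_mc : ∀ m, IsMulticell Q m → r 0 ≤ m → ∀ i, r i ≤ m := by
    intro m hm h0 i
    induction i with
    | zero => exact h0
    | succ k ih =>
      exact hrleast k m (hm.of_refines (hP _) hQ ((hQlub (k + 1)).1 _ le_rfl)) ih
  exact ⟨hmono, N, hstab, hQ_mc, hmono N.zero_le, fun m hm h0 ↦ hle_of_mc m hm h0 N⟩

/-- Let `H` be a nonzero finite-dimensional complex Hilbert space and
`P₀, P₁, …` a sequence of partitions of `H` admitting a partition `Q` that, for every `n`,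
is the least upper bound of `{Pᵢ : i ≥ n}` in the refinement order.  Let `r₀` be a multicell
of `P₀` and let each `r (i+1)` be the least multicell of `P (i+1)` containing `r i`.  Then
`r` is a monotone increasing sequence of subspaces that is eventually constant, and its
eventual value is the least multicell of `Q` containing `r₀`. -/
theorem least_multicell_sequence_stabilizes
    [FiniteDimensional ℂ H] [Nontrivial H]
    (P : ℕ → Set (Submodule ℂ H)) (hP : ∀ i, IsPartition (P i))
    (Q : Set (Submodule ℂ H)) (hQ : IsPartition Q)
    (hQlub : ∀ n : ℕ, (∀ i, n ≤ i → Refines (P i) Q) ∧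
      ∀ Q' : Set (Submodule ℂ H), IsPartition Q' →
        (∀ i, n ≤ i → Refines (P i) Q') → Refines Q Q')
    (r : ℕ → Submodule ℂ H)
    (hr0 : IsMulticell (P 0) (r 0))
    (hrmc : ∀ i, IsMulticell (P (i + 1)) (r (i + 1)))
    (hrle : ∀ i, r i ≤ r (i + 1))
    (hrleast : ∀ i m, IsMulticell (P (i + 1)) m → r i ≤ m → r (i + 1) ≤ m) :
    Monotone r ∧
      ∃ N : ℕ, (∀ n, N ≤ n → r n = r N) ∧ IsMulticell Q (r N) ∧ r 0 ≤ r N ∧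
        ∀ m, IsMulticell Q m → r 0 ≤ m → r N ≤ m :=
  least_multicell_sequence_stabilizes_general P hP Q hQ hQlub r hrmc hrle hrleast
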